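/- arXiv:1908.06720 — 2 statements merged into one kernel-verified Lean document; each statement's English description precedes it below -/
import Mathlib

section
/- For every x ∈ int 𝓛^n, the operator (spectral) norm of the matrix Q_x equals ‖x‖₂², and consequently the operator norm of T_x := Q_{x^{1/2}} equals ‖x‖₂. -/
set_option synthInstance.maxHeartbeats 1000000
set_option maxHeartbeats 1000000

noncomputable section
open scoped BigOperators

namespace SOCP

/-- `E k` is `ℝ^(k+1)`, written as `(x₀; x̄)` with `x̄ ∈ ℝ^k`. -/
abbrev E (k : ℕ) := EuclideanSpace ℝ (Fin (k + 1))

/-- Build an element of `E k` from a plain function. -/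
def mk {k : ℕ} (f : Fin (k + 1) → ℝ) : E k := (WithLp.equiv 2 _).symm f

/-- The Euclidean norm `‖x̄‖` of the tail of `x`. -/
def tnorm {k : ℕ} (x : E k) : ℝ := Real.sqrt (∑ i : Fin k, (x i.succ) ^ 2)

/-- First Jordan eigenvalue `λ₁(x) = x₀ + ‖x̄‖`. -/
def lam1 {k : ℕ} (x : E k) : ℝ := x 0 + tnorm x

/-- Second Jordan eigenvalue `λ₂(x) = x₀ − ‖x̄‖`. -/
def lam2 {k : ℕ} (x : E k) : ℝ := x 0 - tnorm x

/-- Jordan product `x ∘ y = (xᵀy; x₀ȳ + y₀x̄)`. -/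
def jmul {k : ℕ} (x y : E k) : E k :=
  mk (fun j => if j = 0 then ∑ i, x i * y i else x 0 * y j + y 0 * x j)

/-- The Jordan identity `e = (1; 0)`. -/
def idE {k : ℕ} : E k := mk (fun j => if j = 0 then 1 else 0)

/-- First Jordan frame vector `c₁(x) = ½(1; x̄/‖x̄‖)`. -/
def c1 {k : ℕ} (x : E k) : E k :=
  mk (fun j => if j = 0 then 1 / 2 else x j / (2 * tnorm x))

/-- Second Jordan frame vector `c₂(x) = ½(1; −x̄/‖x̄‖)`. -/
def c2 {k : ℕ} (x : E k) : E k :=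
  mk (fun j => if j = 0 then 1 / 2 else -x j / (2 * tnorm x))

/-- Arrowhead matrix `Arw(x) = [[x₀, x̄ᵀ], [x̄, x₀ I]]`. -/
def Arw {k : ℕ} (x : E k) : Matrix (Fin (k + 1)) (Fin (k + 1)) ℝ :=
  Matrix.of fun i j =>
    if i = 0 then x j else if j = 0 then x i else if i = j then x 0 else 0

/-- Quadratic representation `Q_x = 2 Arw(x)² − Arw(x ∘ x)`. -/
def Qmat {k : ℕ} (x : E k) : Matrix (Fin (k + 1)) (Fin (k + 1)) ℝ :=
  (2 : ℝ) • (Arw x * Arw x) - Arw (jmul x x)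

/-- Jordan square root `x^{1/2} = √λ₁ c₁ + √λ₂ c₂` (equal to `(√x₀; 0)` when `x̄ = 0`). -/
def jsqrt {k : ℕ} (x : E k) : E k :=
  if tnorm x = 0 then mk (fun j => if j = 0 then Real.sqrt (x 0) else 0)
  else Real.sqrt (lam1 x) • c1 x + Real.sqrt (lam2 x) • c2 x

/-- `T_x := Q_{x^{1/2}}`. -/
def Tmat {k : ℕ} (x : E k) : Matrix (Fin (k + 1)) (Fin (k + 1)) ℝ := Qmat (jsqrt x)

/-- Jordan inverse `x⁻¹ = λ₁⁻¹ c₁ + λ₂⁻¹ c₂` (equal to `(x₀⁻¹; 0)` when `x̄ = 0`). -/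
def jinv {k : ℕ} (x : E k) : E k :=
  if tnorm x = 0 then mk (fun j => if j = 0 then (x 0)⁻¹ else 0)
  else (lam1 x)⁻¹ • c1 x + (lam2 x)⁻¹ • c2 x

/-- Matrix-vector product, as a map on `E k`. -/
def mulVecE {k : ℕ} (M : Matrix (Fin (k + 1)) (Fin (k + 1)) ℝ) (v : E k) : E k :=
  mk (M.mulVec (WithLp.equiv 2 _ v))

/-- Block vectors `x = (x₁; …; x_r)` with `x_i ∈ ℝ^{d i + 2}` (so each block has dim ≥ 2). -/
abbrev BV {r : ℕ} (d : Fin r → ℕ) : Type := (i : Fin r) → E (d i + 1)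

variable {r : ℕ} {d : Fin r → ℕ}

/-- Spectral norm `‖x‖₂ = max_i (|x_{i,0}| + ‖x̄_i‖)`. -/
def specNorm (x : BV d) : ℝ := ⨆ i, (|x i 0| + tnorm (x i))

/-- Frobenius norm `‖x‖_F = √(Σ_i (λ₁(x_i)² + λ₂(x_i)²))`. -/
def frobNorm (x : BV d) : ℝ := Real.sqrt (∑ i, (lam1 (x i) ^ 2 + lam2 (x i) ^ 2))

/-- Minimum Jordan eigenvalue `λ_min(x) = min_i λ₂(x_i)`. -/
def lamMin (x : BV d) : ℝ := ⨅ i, lam2 (x i)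

/-- Blockwise Jordan product. -/
def jmulB (x y : BV d) : BV d := fun i => jmul (x i) (y i)

/-- Block identity element. -/
def idB : BV d := fun _ => idE

/-- Membership in the interior of the product of Lorentz cones: `‖x̄_i‖ < x_{i,0}` for all `i`. -/
def inIntLB (x : BV d) : Prop := ∀ i, tnorm (x i) < x i 0

/-- Euclidean inner product of the concatenated vectors. -/
def ip (x y : BV d) : ℝ := ∑ i, ∑ j, x i j * y i j

/-- Block-diagonal application of `T_x`: `(T_x s)_i = T_{x_i} s_i`. -/
def TB (x s : BV d) : BV d := fun i => mulVecE (Tmat (x i)) (s i)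

/-- Distance from the central path `d(x, s, ν) = ‖T_x s − ν e‖_F`. -/
def cdist (x s : BV d) (ν : ℝ) : ℝ := frobNorm (TB x s - ν • (idB : BV d))

/-- Blockwise Jordan inverse. -/
def jinvB (x : BV d) : BV d := fun i => jinv (x i)


/-- Operator (spectral) norm of a matrix, w.r.t. the Euclidean norms. -/
def opNorm {k : ℕ} (M : Matrix (Fin (k + 1)) (Fin (k + 1)) ℝ) : ℝ :=
  ‖LinearMap.toContinuousLinearMap (Matrix.toEuclideanLin M)‖

end SOCP

/-!
Writing `δ = x₀² − ‖x̄‖²` and `R = diag(−1, 1, …, 1)`, one has `Q_x = 2 x xᵀ + δ R`. This matrix is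
symmetric, so its operator norm is the supremum of `|⟨Q_x v, v⟩| = |2 ⟨x, v⟩² + δ (‖v̄‖² − v₀²)|`
over unit vectors `v`; Cauchy–Schwarz on the tails reduces the bound `(|x₀| + ‖x̄‖)²` to a
two-variable inequality whose slack is `2 |x₀| ‖x̄‖ (|v₀| − ‖v̄‖)²`. The bound is attained at the
Jordan frame vector `c₁(x)`, an eigenvector with eigenvalue `λ₁(x)²` (and `Q_{−x} = Q_x` handles
`x₀ < 0`). For `T_x = Q_{x^{1/2}}` it remains to see that `|y₀| + ‖ȳ‖ = √λ₁(x)` for `y = x^{1/2}`.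
-/

namespace ContinuousLinearMap

theorem norm_le_opNorm_of_apply_eq_smul {𝕜 F : Type*} [NontriviallyNormedField 𝕜]
    [NormedAddCommGroup F] [NormedSpace 𝕜 F] (T : F →L[𝕜] F) {c : 𝕜} {u : F} (hu : u ≠ 0)
    (hTu : T u = c • u) : ‖c‖ ≤ ‖T‖ := by
  have := T.le_opNorm u
  rw [hTu, norm_smul] at this
  exact le_of_mul_le_mul_right this (norm_pos_iff.2 hu)

variable {𝕜 F : Type*} [RCLike 𝕜] [NormedAddCommGroup F] [InnerProductSpace 𝕜 F]

theorem norm_le_of_abs_re_inner_self_le (T : F →L[𝕜] F) (hT : (T : F →ₗ[𝕜] F).IsSymmetric)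
    {C : ℝ} (hC : 0 ≤ C) (h : ∀ v, |RCLike.re (inner 𝕜 (T v) v)| ≤ C * ‖v‖ ^ 2) : ‖T‖ ≤ C := by
  rw [T.norm_eq_iSup_rayleighQuotient hT]
  refine ciSup_le fun v ↦ ?_
  rcases eq_or_ne v 0 with rfl | hv
  · simpa using hC
  · rw [rayleighQuotient, reApplyInnerSelf_apply, abs_div, abs_sq, div_le_iff₀ (by positivity)]
    exact h v

end ContinuousLinearMap

theorem abs_two_mul_sq_add_mul_le (a s p m t : ℝ) (hs : 0 ≤ s) (ht : |t| ≤ s * m) :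
    |2 * (a * p + t) ^ 2 + (a ^ 2 - s ^ 2) * (m ^ 2 - p ^ 2)| ≤ (|a| + s) ^ 2 * (p ^ 2 + m ^ 2) := by
  have hlin : |a * p + t| ≤ |a| * |p| + s * m :=
    (abs_add_le _ _).trans (by rw [abs_mul]; linarith)
  have hsq : (a * p + t) ^ 2 ≤ (|a| * |p| + s * m) ^ 2 :=
    sq_le_sq' (abs_le.1 hlin).1 (abs_le.1 hlin).2
  rw [abs_le]
  constructor
  · nlinarith [sq_abs a, abs_nonneg a, sq_nonneg (a * p + t), mul_nonneg (abs_nonneg a) hs]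
  · nlinarith [mul_nonneg (mul_nonneg (abs_nonneg a) hs) (sq_nonneg (|p| - m)), sq_abs a, sq_abs p]

namespace SOCP

open Matrix

variable {k : ℕ}

theorem tnorm_nonneg (x : E k) : 0 ≤ tnorm x := Real.sqrt_nonneg _

theorem tnorm_sq (x : E k) : tnorm x ^ 2 = ∑ i : Fin k, x i.succ ^ 2 :=
  Real.sq_sqrt (by positivity)

theorem sum_tail_mul_self (x : E k) : ∑ i : Fin k, x i.succ * x i.succ = tnorm x ^ 2 := by
  simp_rw [tnorm_sq, sq]

theorem norm_sq_eq (v : E k) : ‖v‖ ^ 2 = v 0 ^ 2 + tnorm v ^ 2 := by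
  rw [EuclideanSpace.norm_sq_eq, tnorm_sq, Fin.sum_univ_succ]
  simp only [Real.norm_eq_abs, sq_abs]

theorem tnorm_neg (x : E k) : tnorm (-x) = tnorm x := by
  simp [tnorm]

theorem tnorm_eq_of_tail_eq_smul {x y : E k} (c : ℝ) (h : ∀ i : Fin k, y i.succ = c * x i.succ) :
    tnorm y = |c| * tnorm x := by
  rw [tnorm, tnorm, ← Real.sqrt_sq_eq_abs, ← Real.sqrt_mul (sq_nonneg c), Finset.mul_sum]
  simp_rw [h, mul_pow]

theorem tail_eq_zero_of_tnorm_eq_zero {x : E k} (h : tnorm x = 0) (i : Fin k) : x i.succ = 0 := by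
  have hsum : ∑ i : Fin k, x i.succ ^ 2 = 0 := by rw [← tnorm_sq, h, sq, zero_mul]
  exact pow_eq_zero_iff two_ne_zero |>.1 <|
    (Finset.sum_eq_zero_iff_of_nonneg fun i _ ↦ sq_nonneg (x i.succ)).1 hsum i (Finset.mem_univ i)

theorem abs_sum_tail_mul_le (x v : E k) :
    |∑ i : Fin k, x i.succ * v i.succ| ≤ tnorm x * tnorm v := by
  refine abs_le_of_sq_le_sq ?_ (mul_nonneg (tnorm_nonneg x) (tnorm_nonneg v))
  rw [mul_pow, tnorm_sq, tnorm_sq]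
  exact Finset.sum_mul_sq_le_sq_mul_sq _ _ _

theorem Arw_isHermitian (x : E k) : (Arw x).IsHermitian := by
  ext i j
  simp only [conjTranspose_apply, star_trivial, Arw, of_apply]
  split_ifs <;> grind

theorem Qmat_isHermitian (x : E k) : (Qmat x).IsHermitian := by
  have h := isHermitian_mul_conjTranspose_self (Arw x)
  rw [(Arw_isHermitian x).eq] at h
  exact (h.smul (IsSelfAdjoint.all 2)).sub (Arw_isHermitian _)

theorem Qmat_neg (x : E k) : Qmat (-x) = Qmat x := by
  have hArw : Arw (-x) = -Arw x := by
    ext i j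
    simp only [Arw, of_apply, Matrix.neg_apply, PiLp.neg_apply]
    split_ifs <;> simp
  have hjmul : jmul (-x) (-x) = jmul x x := by
    ext j
    simp [jmul, mk]
  rw [Qmat, Qmat, hArw, hjmul, neg_mul_neg]

theorem Arw_mulVec (y : E k) (w : Fin (k + 1) → ℝ) :
    Arw y *ᵥ w = fun j ↦ if j = 0 then ∑ i, y i * w i else y 0 * w j + w 0 * y j := by
  funext j
  cases j using Fin.cases with
  | zero => simp [mulVec, dotProduct, Arw]
  | succ m =>
    simp only [mulVec, dotProduct, Arw, of_apply, Fin.succ_ne_zero, if_false,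
      Fin.sum_univ_succ, if_true, Fin.succ_inj]
    rw [Finset.sum_eq_single m (fun b _ hb ↦ by simp [Ne.symm hb]) (by simp)]
    simp only [if_true]
    ring

theorem Qmat_mulVec (x : E k) (w : Fin (k + 1) → ℝ) :
    Qmat x *ᵥ w = fun j ↦
      2 * (∑ i, x i * w i) * x j + (x 0 ^ 2 - tnorm x ^ 2) * (if j = 0 then -w 0 else w j) := by
  rw [Qmat, sub_mulVec, smul_mulVec, ← mulVec_mulVec, Arw_mulVec x (Arw x *ᵥ w)]
  funext j
  cases j using Fin.cases with
  | zero =>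
    have h1 : ∑ i : Fin k, x i.succ * (x 0 * w i.succ + w 0 * x i.succ)
        = x 0 * ∑ i : Fin k, x i.succ * w i.succ + w 0 * tnorm x ^ 2 := by
      rw [← sum_tail_mul_self, Finset.mul_sum, Finset.mul_sum, ← Finset.sum_add_distrib]
      exact Finset.sum_congr rfl fun _ _ ↦ by ring
    have h2 : ∑ i : Fin k, (x 0 * x i.succ + x 0 * x i.succ) * w i.succ
        = 2 * x 0 * ∑ i : Fin k, x i.succ * w i.succ := by
      rw [Finset.mul_sum]
      exact Finset.sum_congr rfl fun _ _ ↦ by ring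
    simp only [Arw_mulVec, Fin.sum_univ_succ, jmul, mk, WithLp.equiv_symm_apply, Pi.sub_apply,
      Pi.smul_apply, smul_eq_mul, Fin.succ_ne_zero, if_true, if_false, sum_tail_mul_self]
    linear_combination 2 * h1 - h2
  | succ m =>
    simp only [Arw_mulVec, Fin.sum_univ_succ, jmul, mk, WithLp.equiv_symm_apply, Pi.sub_apply,
      Pi.smul_apply, smul_eq_mul, Fin.succ_ne_zero, if_true, if_false, sum_tail_mul_self]
    ring

theorem inner_toEuclideanLin_Qmat_self (x v : E k) :
    inner ℝ (toEuclideanLin (Qmat x) v) v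
      = 2 * (∑ i, x i * v i) ^ 2 + (x 0 ^ 2 - tnorm x ^ 2) * (tnorm v ^ 2 - v 0 ^ 2) := by
  have htail (A D : ℝ) : ∑ i : Fin k, v i.succ * (A * x i.succ + D * v i.succ)
      = A * ∑ i : Fin k, x i.succ * v i.succ + D * tnorm v ^ 2 := by
    rw [tnorm_sq, Finset.mul_sum, Finset.mul_sum, ← Finset.sum_add_distrib]
    exact Finset.sum_congr rfl fun _ _ ↦ by ring
  simp only [EuclideanSpace.inner_eq_star_dotProduct, dotProduct, ofLp_toLpLin, toLin'_apply,
    Qmat_mulVec, Fin.sum_univ_succ, Pi.star_apply, star_trivial, Fin.succ_ne_zero, if_true,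
    if_false, htail]
  ring

theorem opNorm_Qmat_le (x : E k) : opNorm (Qmat x) ≤ (|x 0| + tnorm x) ^ 2 := by
  refine ContinuousLinearMap.norm_le_of_abs_re_inner_self_le _
    (isSymmetric_toEuclideanLin_iff.2 (Qmat_isHermitian x)) (sq_nonneg _) fun v ↦ ?_
  rw [LinearMap.coe_toContinuousLinearMap', RCLike.re_to_real, inner_toEuclideanLin_Qmat_self,
    Fin.sum_univ_succ, norm_sq_eq]
  exact abs_two_mul_sq_add_mul_le _ _ _ _ _ (tnorm_nonneg x) (abs_sum_tail_mul_le x v)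

theorem c1_ne_zero (x : E k) : c1 x ≠ 0 := fun h ↦ by
  simpa [c1, mk] using congrArg (fun v : E k ↦ v 0) h

theorem toEuclideanLin_Qmat_c1 (x : E k) :
    toEuclideanLin (Qmat x) (c1 x) = lam1 x ^ 2 • c1 x := by
  have hdot : ∑ i, x i * c1 x i = lam1 x / 2 := by
    -- `x / 0 = 0` makes this hold also when `x̄ = 0`
    have hs : tnorm x ^ 2 / (2 * tnorm x) = tnorm x / 2 := by
      rcases eq_or_ne (tnorm x) 0 with h | h
      · simp [h]
      · field_simp
    simp only [c1, mk, WithLp.equiv_symm_apply, Fin.sum_univ_succ, if_true, Fin.succ_ne_zero,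
      if_false, mul_div_assoc', ← Finset.sum_div, sum_tail_mul_self, hs, lam1]
    ring
  ext j
  simp only [ofLp_toLpLin, toLin'_apply, Qmat_mulVec, hdot, PiLp.smul_apply, smul_eq_mul]
  cases j using Fin.cases with
  | zero =>
    simp only [c1, mk, WithLp.equiv_symm_apply, if_true, lam1]
    ring
  | succ m =>
    simp only [c1, mk, WithLp.equiv_symm_apply, Fin.succ_ne_zero, if_false, lam1]
    rcases eq_or_ne (tnorm x) 0 with h | h
    · simp [tail_eq_zero_of_tnorm_eq_zero h]
    · field_simp
      ring

theorem opNorm_Qmat (x : E k) : opNorm (Qmat x) = (|x 0| + tnorm x) ^ 2 := by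
  wlog hx : 0 ≤ x 0 generalizing x
  · simpa [Qmat_neg, tnorm_neg, abs_neg] using this (-x) (neg_nonneg.2 (le_of_not_ge hx))
  refine (opNorm_Qmat_le x).antisymm ?_
  have := ContinuousLinearMap.norm_le_opNorm_of_apply_eq_smul
    (LinearMap.toContinuousLinearMap (toEuclideanLin (Qmat x))) (c1_ne_zero x)
    (toEuclideanLin_Qmat_c1 x)
  rwa [Real.norm_of_nonneg (sq_nonneg _), lam1, ← abs_of_nonneg hx] at this

theorem abs_jsqrt_zero_add_tnorm (x : E k) :
    |jsqrt x 0| + tnorm (jsqrt x) = √(lam1 x) := by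
  by_cases hs : tnorm x = 0
  · have htail : ∀ i : Fin k, jsqrt x i.succ = 0 * x i.succ := fun i ↦ by
      simp [jsqrt, hs, mk]
    rw [tnorm_eq_of_tail_eq_smul 0 htail]
    simp [jsqrt, hs, mk, lam1]
  · have hhead : jsqrt x 0 = (√(lam1 x) + √(lam2 x)) / 2 := by
      simp only [jsqrt, hs, if_false, c1, c2, mk, WithLp.equiv_symm_apply, PiLp.add_apply,
        PiLp.smul_apply, smul_eq_mul, if_true]
      ring
    have htail : ∀ i : Fin k,
        jsqrt x i.succ = (√(lam1 x) - √(lam2 x)) / (2 * tnorm x) * x i.succ := fun i ↦ by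
      simp only [jsqrt, hs, if_false, c1, c2, mk, WithLp.equiv_symm_apply, PiLp.add_apply,
        PiLp.smul_apply, smul_eq_mul, Fin.succ_ne_zero]
      ring
    have hle : √(lam2 x) ≤ √(lam1 x) :=
      Real.sqrt_le_sqrt (by rw [lam1, lam2]; linarith [tnorm_nonneg x])
    have hcoef : 0 ≤ (√(lam1 x) - √(lam2 x)) / (2 * tnorm x) :=
      div_nonneg (sub_nonneg.2 hle) (mul_nonneg zero_le_two (tnorm_nonneg x))
    rw [tnorm_eq_of_tail_eq_smul _ htail, hhead, abs_of_nonneg hcoef,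
      abs_of_nonneg (by positivity : 0 ≤ (√(lam1 x) + √(lam2 x)) / 2)]
    field_simp
    ring

/-- For `x ∈ int 𝓛^n`, `‖Q_x‖ = ‖x‖₂²` and `‖T_x‖ = ‖x‖₂`,
where `‖x‖₂ = |x₀| + ‖x̄‖`. -/
theorem opNorm_Qmat_Tmat {k : ℕ} (x : E k) (hx : tnorm x < x 0) :
    opNorm (Qmat x) = (|x 0| + tnorm x) ^ 2 ∧ opNorm (Tmat x) = |x 0| + tnorm x := by
  have hx0 : 0 ≤ x 0 := (tnorm_nonneg x).trans hx.le
  refine ⟨opNorm_Qmat x, ?_⟩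
  rw [Tmat, opNorm_Qmat, abs_jsqrt_zero_add_tnorm,
    Real.sq_sqrt (by rw [lam1]; linarith [tnorm_nonneg x]), lam1, abs_of_nonneg hx0]

end SOCP
end
end

section
/- For every x ∈ int 𝓛^n, the linear map y ↦ Q_x y preserves the Lorentz cone and its interior: Q_x(𝓛^n) = 𝓛^n and Q_x(int 𝓛^n) = int 𝓛^n (i.e. the image of 𝓛^n under Q_x equals 𝓛^n, and likewise for the interior). -/
set_option synthInstance.maxHeartbeats 1000000
set_option maxHeartbeats 1000000

noncomputable section
open scoped BigOperators

namespace SOCP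

variable {r : ℕ} {d : Fin r → ℕ}

/-!
Through the Jordan product, `Q_x y = 2 x ∘ (x ∘ y) − x² ∘ y`, so `Q_x y` has head
`(x₀² + ‖x̄‖²) y₀ + 2 x₀ ⟪x̄, ȳ⟫` and tail `2 (x₀ y₀ + ⟪x̄, ȳ⟫) x̄ + det x • ȳ`, where
`det x = x₀² − ‖x̄‖²` (`jdet`). Hence `det (Q_x y) = (det x)² det y`, and by Cauchy–Schwarz the
head is at least `(|x₀| − ‖x̄‖)² y₀ ≥ 0` on the cone; so every `Q_x` maps `𝓛^n` into itself, and
`int 𝓛^n` into itself when `det x ≠ 0`. For surjectivity, `Q_x Q_{Rx} = (det x)² I` with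
`R = diag(1, −I)` (`reflect`), so the inverse `(det x)⁻² Q_{Rx}` of `Q_x` preserves both sets too.
-/

open scoped RealInnerProductSpace

section

variable {k : ℕ}

def tail (x : E k) : EuclideanSpace ℝ (Fin k) := WithLp.toLp 2 fun i => x i.succ

@[simp] lemma tail_apply (x : E k) (i : Fin k) : tail x i = x i.succ := rfl

lemma tail_sub (x y : E k) : tail (x - y) = tail x - tail y := rfl

lemma tail_smul (c : ℝ) (x : E k) : tail (c • x) = c • tail x := rfl

@[simp] lemma mk_apply (f : Fin (k + 1) → ℝ) (j : Fin (k + 1)) : mk f j = f j := rfl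

lemma ext_of_apply_zero_of_tail {x y : E k} (h0 : x 0 = y 0) (ht : tail x = tail y) :
    x = y := by
  ext j
  induction j using Fin.cases with
  | zero => exact h0
  | succ i => exact congrArg (· i) ht

lemma tnorm_eq_norm_tail (x : E k) : tnorm x = ‖tail x‖ := by
  simp [tnorm, EuclideanSpace.norm_eq]

lemma inner_tail (x y : E k) : ⟪tail x, tail y⟫ = ∑ i : Fin k, x i.succ * y i.succ := by
  simp [PiLp.inner_apply, mul_comm]

lemma jmul_apply_zero (x y : E k) : jmul x y 0 = x 0 * y 0 + ⟪tail x, tail y⟫ := by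
  simp [jmul, inner_tail, Fin.sum_univ_succ]

lemma tail_jmul (x y : E k) : tail (jmul x y) = x 0 • tail y + y 0 • tail x := by
  ext i
  simp [jmul, Fin.succ_ne_zero]

lemma mulVecE_Arw (x y : E k) : mulVecE (Arw x) y = jmul x y := by
  refine ext_of_apply_zero_of_tail ?_ ?_
  · simp [mulVecE, Arw, jmul, Matrix.mulVec, dotProduct]
  · ext i
    simp only [mulVecE, Arw, WithLp.equiv_apply, tail_apply, mk_apply, Matrix.mulVec, dotProduct,
      Matrix.of_apply, Fin.succ_ne_zero, ↓reduceIte, ite_mul, zero_mul, Fin.sum_univ_succ,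
      Fin.succ_inj, Finset.sum_ite_eq, Finset.mem_univ, jmul]
    ring

lemma sub_mulVecE (A B : Matrix (Fin (k + 1)) (Fin (k + 1)) ℝ) (v : E k) :
    mulVecE (A - B) v = mulVecE A v - mulVecE B v := by
  ext j; simp [mulVecE, Matrix.sub_mulVec]

lemma smul_mulVecE (c : ℝ) (A : Matrix (Fin (k + 1)) (Fin (k + 1)) ℝ) (v : E k) :
    mulVecE (c • A) v = c • mulVecE A v := by
  ext j; simp [mulVecE, Matrix.smul_mulVec]

lemma mulVecE_mulVecE (A B : Matrix (Fin (k + 1)) (Fin (k + 1)) ℝ) (v : E k) :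
    mulVecE A (mulVecE B v) = mulVecE (A * B) v := by
  ext j; simp [mulVecE, mk, Matrix.mulVec_mulVec]

lemma mulVecE_smul (A : Matrix (Fin (k + 1)) (Fin (k + 1)) ℝ) (c : ℝ) (v : E k) :
    mulVecE A (c • v) = c • mulVecE A v := by
  ext j; simp [mulVecE, Matrix.mulVec_smul]

lemma mulVecE_Qmat (x y : E k) :
    mulVecE (Qmat x) y = (2 : ℝ) • jmul x (jmul x y) - jmul (jmul x x) y := by
  rw [Qmat, sub_mulVecE, smul_mulVecE, ← mulVecE_mulVecE, mulVecE_Arw, mulVecE_Arw, mulVecE_Arw]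

lemma mulVecE_Qmat_apply_zero (x y : E k) :
    mulVecE (Qmat x) y 0 = (x 0 ^ 2 + ‖tail x‖ ^ 2) * y 0 + 2 * x 0 * ⟪tail x, tail y⟫ := by
  rw [mulVecE_Qmat]
  simp only [PiLp.sub_apply, PiLp.smul_apply, jmul_apply_zero, tail_jmul, smul_eq_mul,
    inner_add_left, inner_add_right, inner_smul_left, inner_smul_right, real_inner_self_eq_norm_sq,
    RCLike.conj_to_real]
  ring

lemma tail_mulVecE_Qmat (x y : E k) :
    tail (mulVecE (Qmat x) y) =
      (2 * (x 0 * y 0 + ⟪tail x, tail y⟫)) • tail x + (x 0 ^ 2 - ‖tail x‖ ^ 2) • tail y := by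
  simp only [mulVecE_Qmat, tail_sub, tail_smul, tail_jmul, jmul_apply_zero,
    real_inner_self_eq_norm_sq]
  module

def jdet (x : E k) : ℝ := x 0 ^ 2 - ‖tail x‖ ^ 2

def lorentzCone (k : ℕ) : Set (E k) := {y | tnorm y ≤ y 0}

def lorentzConeInterior (k : ℕ) : Set (E k) := {y | tnorm y < y 0}

lemma lorentzConeInterior_subset : lorentzConeInterior k ⊆ lorentzCone k :=
  fun y (hy : tnorm y < y 0) => hy.le

lemma mem_lorentzCone_iff {y : E k} : y ∈ lorentzCone k ↔ 0 ≤ y 0 ∧ 0 ≤ jdet y := by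
  rw [lorentzCone, Set.mem_ofPred_eq, tnorm_eq_norm_tail, jdet, sub_nonneg]
  constructor
  · intro h
    have h0 := (norm_nonneg _).trans h
    exact ⟨h0, (sq_le_sq₀ (norm_nonneg _) h0).2 h⟩
  · rintro ⟨h0, h⟩
    exact (sq_le_sq₀ (norm_nonneg _) h0).1 h

lemma mem_lorentzConeInterior_iff {y : E k} :
    y ∈ lorentzConeInterior k ↔ 0 < y 0 ∧ 0 < jdet y := by
  rw [lorentzConeInterior, Set.mem_ofPred_eq, tnorm_eq_norm_tail, jdet, sub_pos]
  constructor
  · intro h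
    have h0 := (norm_nonneg _).trans_lt h
    exact ⟨h0, (sq_lt_sq₀ (norm_nonneg _) h0.le).2 h⟩
  · rintro ⟨h0, h⟩
    exact (sq_lt_sq₀ (norm_nonneg _) h0.le).1 h

lemma smul_mem_lorentzCone {c : ℝ} (hc : 0 ≤ c) {y : E k} (hy : y ∈ lorentzCone k) :
    c • y ∈ lorentzCone k := by
  simp only [lorentzCone, Set.mem_ofPred_eq, tnorm_eq_norm_tail, tail_smul, norm_smul,
    Real.norm_of_nonneg hc, PiLp.smul_apply, smul_eq_mul] at hy ⊢
  exact mul_le_mul_of_nonneg_left hy hc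

lemma smul_mem_lorentzConeInterior {c : ℝ} (hc : 0 < c) {y : E k}
    (hy : y ∈ lorentzConeInterior k) : c • y ∈ lorentzConeInterior k := by
  simp only [lorentzConeInterior, Set.mem_ofPred_eq, tnorm_eq_norm_tail, tail_smul, norm_smul,
    Real.norm_of_nonneg hc.le, PiLp.smul_apply, smul_eq_mul] at hy ⊢
  exact mul_lt_mul_of_pos_left hy hc

lemma jdet_mulVecE_Qmat (x y : E k) : jdet (mulVecE (Qmat x) y) = jdet x ^ 2 * jdet y := by
  simp only [jdet, mulVecE_Qmat_apply_zero, tail_mulVecE_Qmat, norm_add_sq_real, norm_smul,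
    mul_pow, Real.norm_eq_abs, sq_abs, inner_smul_left, inner_smul_right, RCLike.conj_to_real]
  ring

lemma mulVecE_Qmat_apply_zero_nonneg (x : E k) {y : E k} (hy : y ∈ lorentzCone k) :
    0 ≤ mulVecE (Qmat x) y 0 := by
  have hy' : ‖tail y‖ ≤ y 0 := (tnorm_eq_norm_tail y).symm.trans_le hy
  have hy0 : 0 ≤ y 0 := (norm_nonneg _).trans hy'
  have hcs : |2 * x 0 * ⟪tail x, tail y⟫| ≤ 2 * |x 0| * (‖tail x‖ * y 0) := by
    rw [abs_mul, abs_mul, abs_two]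
    gcongr
    exact (abs_real_inner_le_norm _ _).trans (by gcongr)
  rw [mulVecE_Qmat_apply_zero]
  calc 0 ≤ (|x 0| - ‖tail x‖) ^ 2 * y 0 := by positivity
    _ = (x 0 ^ 2 + ‖tail x‖ ^ 2) * y 0 - 2 * |x 0| * (‖tail x‖ * y 0) := by
      rw [sub_sq, sq_abs]; ring
    _ ≤ _ := by linarith [neg_abs_le (2 * x 0 * ⟪tail x, tail y⟫)]

lemma mapsTo_mulVecE_Qmat_lorentzCone (x : E k) :
    Set.MapsTo (mulVecE (Qmat x)) (lorentzCone k) (lorentzCone k) := fun y hy =>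
  mem_lorentzCone_iff.2 ⟨mulVecE_Qmat_apply_zero_nonneg x hy, by
    rw [jdet_mulVecE_Qmat]; exact mul_nonneg (sq_nonneg _) (mem_lorentzCone_iff.1 hy).2⟩

lemma mapsTo_mulVecE_Qmat_lorentzConeInterior {x : E k} (hx : jdet x ≠ 0) :
    Set.MapsTo (mulVecE (Qmat x)) (lorentzConeInterior k) (lorentzConeInterior k) := by
  intro y hy
  have hdet : 0 < jdet (mulVecE (Qmat x) y) := by
    rw [jdet_mulVecE_Qmat]
    exact mul_pos (by positivity) (mem_lorentzConeInterior_iff.1 hy).2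
  have h0 := mulVecE_Qmat_apply_zero_nonneg x (lorentzConeInterior_subset hy)
  refine mem_lorentzConeInterior_iff.2 ⟨h0.lt_of_ne fun h => ?_, hdet⟩
  rw [jdet, ← h] at hdet
  linarith [sq_nonneg ‖tail (mulVecE (Qmat x) y)‖]

def reflect (x : E k) : E k := mk fun j => if j = 0 then x 0 else -x j

@[simp] lemma reflect_apply_zero (x : E k) : reflect x 0 = x 0 := rfl

@[simp] lemma tail_reflect (x : E k) : tail (reflect x) = -tail x := by
  ext i; simp [reflect, Fin.succ_ne_zero]

lemma jdet_reflect (x : E k) : jdet (reflect x) = jdet x := by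
  simp [jdet]

lemma mulVecE_Qmat_mulVecE_Qmat_reflect (x z : E k) :
    mulVecE (Qmat x) (mulVecE (Qmat (reflect x)) z) = jdet x ^ 2 • z := by
  refine ext_of_apply_zero_of_tail ?_ ?_
  · simp only [mulVecE_Qmat_apply_zero, tail_mulVecE_Qmat, reflect_apply_zero, tail_reflect,
      inner_add_right, inner_smul_right, inner_neg_left, inner_neg_right, norm_neg,
      real_inner_self_eq_norm_sq, PiLp.smul_apply, smul_eq_mul, jdet]
    ring
  · simp only [mulVecE_Qmat_apply_zero, tail_mulVecE_Qmat, reflect_apply_zero, tail_reflect,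
      inner_add_right, inner_smul_right, inner_neg_left, inner_neg_right, norm_neg,
      real_inner_self_eq_norm_sq, tail_smul, jdet]
    module

lemma rightInverse_mulVecE_Qmat {x : E k} (hx : jdet x ≠ 0) :
    Function.RightInverse (fun z => mulVecE (Qmat (reflect x)) ((jdet x ^ 2)⁻¹ • z))
      (mulVecE (Qmat x)) := fun z => by
  simp only [mulVecE_smul, mulVecE_Qmat_mulVecE_Qmat_reflect, smul_smul,
    inv_mul_cancel₀ (pow_ne_zero 2 hx), one_smul]

end

/-- For `x ∈ int 𝓛^n`, the map `y ↦ Q_x y` preserves the Lorentz cone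
and its interior: `Q_x(𝓛^n) = 𝓛^n` and `Q_x(int 𝓛^n) = int 𝓛^n`. -/
theorem Qmat_preserves_cone {k : ℕ} (x : E k) (hx : tnorm x < x 0) :
    (mulVecE (Qmat x)) '' {y : E k | tnorm y ≤ y 0} = {y : E k | tnorm y ≤ y 0} ∧
    (mulVecE (Qmat x)) '' {y : E k | tnorm y < y 0} = {y : E k | tnorm y < y 0} := by
  have hdet : jdet x ≠ 0 := (mem_lorentzConeInterior_iff.1 hx).2.ne'
  have hinv := (rightInverse_mulVecE_Qmat hdet).rightInvOn
  have hc : 0 < (jdet x ^ 2)⁻¹ := by positivity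
  constructor
  · refine Set.SurjOn.image_eq_of_mapsTo ((hinv _).surjOn fun z hz => ?_)
      (mapsTo_mulVecE_Qmat_lorentzCone x)
    exact mapsTo_mulVecE_Qmat_lorentzCone _ (smul_mem_lorentzCone hc.le hz)
  · refine Set.SurjOn.image_eq_of_mapsTo ((hinv _).surjOn fun z hz => ?_)
      (mapsTo_mulVecE_Qmat_lorentzConeInterior hdet)
    exact mapsTo_mulVecE_Qmat_lorentzConeInterior (by rwa [jdet_reflect])
      (smul_mem_lorentzConeInterior hc hz)

end SOCP
end
end
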